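/- arXiv:1603.08888 — 5 statements merged into one kernel-verified Lean document; each statement's English description precedes it below -/
import Mathlib

section
/- A vector field F : V^n → V^n is of the form F = Γ_f for some f : V^n → V if and only if F ∘ A_{σ_i} = A_{σ_i} ∘ F for all σ_i ∈ Σ. Moreover, in that case f = F_{σ_1}. -/
/-- The regular-representation maps `A_σ` on `V^n = (Σ → V)`. -/
def Amap {M : Type*} [Monoid M] {V : Type*} [AddCommGroup V] [Module ℝ V]
    (m : M) : (M → V) →ₗ[ℝ] (M → V) where
  toFun X := fun j => X (j * m)
  map_add' _ _ := rfl
  map_smul' _ _ := rfl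

/-- The fundamental network vector field `Γ_f`, defined componentwise by
`(Γ_f)_σ = f ∘ A_σ`. -/
def GammaF {M : Type*} [Monoid M] {V : Type*} [AddCommGroup V] [Module ℝ V]
    (f : (M → V) → V) : (M → V) → (M → V) :=
  fun X => fun m => f (Amap m X)

section

variable {M : Type*} [Monoid M] {V : Type*} [AddCommGroup V] [Module ℝ V]

@[simp]
theorem Amap_apply (m : M) (X : M → V) (j : M) : Amap m X j = X (j * m) := rfl

theorem Amap_Amap (m m' : M) (X : M → V) : Amap m (Amap m' X) = Amap (m * m') X := by
  funext j
  simp only [Amap_apply, mul_assoc]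

theorem GammaF_apply (f : (M → V) → V) (X : M → V) (m : M) :
    GammaF f X m = f (Amap m X) := rfl

theorem GammaF_Amap (f : (M → V) → V) (m : M) (X : M → V) :
    GammaF f (Amap m X) = Amap m (GammaF f X) := by
  funext j
  simp only [GammaF_apply, Amap_apply, Amap_Amap]

theorem eq_GammaF_of_Amap_comm {F : (M → V) → (M → V)}
    (hF : ∀ (m : M) (X : M → V), F (Amap m X) = Amap m (F X)) :
    F = GammaF (fun Y => F Y 1) := by
  funext X m
  rw [GammaF_apply, hF, Amap_apply, one_mul]

end

theorem fundamental_iff_equivariant_general {M : Type*} [Monoid M]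
    {V : Type*} [AddCommGroup V] [Module ℝ V] (F : (M → V) → (M → V)) :
    ((∃ f : (M → V) → V, F = GammaF f) ↔
      (∀ (m : M) (X : M → V), F (Amap m X) = Amap m (F X))) ∧
    ((∀ (m : M) (X : M → V), F (Amap m X) = Amap m (F X)) →
      F = GammaF (fun Y => F Y 1)) := by
  refine ⟨⟨?_, fun hF => ⟨_, eq_GammaF_of_Amap_comm hF⟩⟩, eq_GammaF_of_Amap_comm⟩
  rintro ⟨f, rfl⟩
  exact GammaF_Amap f

/-- `F = Γ_f` for some `f` iff `F` commutes with all `A_σ`;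
moreover, in that case `f = F_{σ₁}`, i.e. `F = Γ_{F_{σ₁}}`. -/
theorem fundamental_iff_equivariant {M : Type*} [Monoid M] [Fintype M]
    {V : Type*} [AddCommGroup V] [Module ℝ V] (F : (M → V) → (M → V)) :
    ((∃ f : (M → V) → V, F = GammaF f) ↔
      (∀ (m : M) (X : M → V), F (Amap m X) = Amap m (F X))) ∧
    ((∀ (m : M) (X : M → V), F (Amap m X) = Amap m (F X)) →
      F = GammaF (fun Y => F Y 1)) :=
  fundamental_iff_equivariant_general F
end

section
/- If f : V^n × Ω → V is differentiable at 0, then the linearization of the augmented fundamental network vector field satisfies D Γ̲_f(0) x̲ = Γ̲_h(x̲) where h(x̲) := Df(0) x̲; i.e., the derivative at the origin of a fundamental network vector field is again a fundamental network vector field, with response function the derivative of f. -/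
/-- The augmented fundamental network vector field `Γ̲_g` on `V^n × Ω`
(`Ω = ℝ^l`): the `σ`-component is `g ∘ A̲_σ` where `A̲_σ(x,λ) = (A_σ x, λ)`,
and the `λ`-component is `0`. -/
def GammaAug {M : Type*} [Monoid M] {l : ℕ} {V : Type*} [NormedAddCommGroup V]
    [NormedSpace ℝ V]
    (g : ((M → V) × (Fin l → ℝ)) → V) :
    ((M → V) × (Fin l → ℝ)) → ((M → V) × (Fin l → ℝ)) :=
  fun p => ((fun m => g ((fun j => p.1 (j * m)), p.2)), 0)

namespace GammaAug

variable {M : Type*} [Monoid M] {l : ℕ} {V : Type*} [NormedAddCommGroup V] [NormedSpace ℝ V]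

/-- The operator `A̲_σ(x, λ) = (A_σ x, λ)`. -/
def augShift (σ : M) : ((M → V) × (Fin l → ℝ)) →L[ℝ] ((M → V) × (Fin l → ℝ)) :=
  (ContinuousLinearMap.pi fun j =>
      (ContinuousLinearMap.proj (R := ℝ) (φ := fun _ : M => V) (j * σ)).comp
        (ContinuousLinearMap.fst ℝ (M → V) (Fin l → ℝ))).prod
    (ContinuousLinearMap.snd ℝ (M → V) (Fin l → ℝ))

/-- `Γ̲_h` for a continuous linear response function `h`, as a continuous linear map. -/
def toCLM (h : ((M → V) × (Fin l → ℝ)) →L[ℝ] V) :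
    ((M → V) × (Fin l → ℝ)) →L[ℝ] ((M → V) × (Fin l → ℝ)) :=
  (ContinuousLinearMap.pi fun σ => h.comp (augShift σ)).prod 0

theorem toCLM_apply (h : ((M → V) × (Fin l → ℝ)) →L[ℝ] V) (x : (M → V) × (Fin l → ℝ)) :
    toCLM h x = GammaAug h x := rfl

variable [Fintype M]

/-- Chain rule for `Γ̲_f`: its `σ`-component is `f` composed with the linear map `A̲_σ`. -/
theorem hasFDerivAt {f : ((M → V) × (Fin l → ℝ)) → V}
    {f' : ((M → V) × (Fin l → ℝ)) →L[ℝ] V} {p : (M → V) × (Fin l → ℝ)}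
    (hf : ∀ σ : M, HasFDerivAt f f' (augShift σ p)) :
    HasFDerivAt (GammaAug f) (toCLM f') p :=
  (hasFDerivAt_pi.2 fun σ => (hf σ).comp p (augShift (V := V) (l := l) σ).hasFDerivAt).prodMk
    (hasFDerivAt_const 0 p)

end GammaAug

/-- if `f` is differentiable at `0`, then
`DΓ̲_f(0) x̲ = Γ̲_h(x̲)` where `h = Df(0)`: the linearization at the origin of a
fundamental network vector field is again a fundamental network vector field,
with response function the derivative of `f`. -/
theorem fderiv_GammaAug {M : Type*} [Monoid M] [Fintype M] {l : ℕ}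
    {V : Type*} [NormedAddCommGroup V] [NormedSpace ℝ V]
    (f : ((M → V) × (Fin l → ℝ)) → V) (hf : DifferentiableAt ℝ f 0) :
    ∀ x : (M → V) × (Fin l → ℝ),
      fderiv ℝ (GammaAug f) 0 x = GammaAug (fun y => fderiv ℝ f 0 y) x := by
  intro x
  have hderiv : HasFDerivAt (GammaAug f) (GammaAug.toCLM (fderiv ℝ f 0)) 0 :=
    GammaAug.hasFDerivAt fun σ => by simpa only [map_zero] using hf.hasFDerivAt
  rw [hderiv.fderiv, GammaAug.toCLM_apply]
end

section
/- The vector field γ_f^A of network A commutes with the linear map S : (x_1,x_2,x_3) ↦ (x_2,x_3,x_3), and conversely every map F : V^3 → V^3 satisfying F ∘ S = S ∘ F equals γ_f^A for f(y_1,y_2,y_3) := F_1(y_1,y_2,y_3). -/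
/-- The admissible vector field of network A with response function `f`. -/
def gammaA {V : Type*} (f : V → V → V → V) : V × V × V → V × V × V :=
  fun x => (f x.1 x.2.1 x.2.2, f x.2.1 x.2.2 x.2.2, f x.2.2 x.2.2 x.2.2)

/-- The (linear) map `S(x₁,x₂,x₃) = (x₂,x₃,x₃)` on `V³`. -/
def Smap {V : Type*} : V × V × V → V × V × V :=
  fun x => (x.2.1, x.2.2, x.2.2)

section

variable {V : Type*}

theorem gammaA_comp_Smap (f : V → V → V → V) : gammaA f ∘ Smap = Smap ∘ gammaA f := rfl

variable {F : V × V × V → V × V × V}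

theorem fst_apply_Smap_of_comp_Smap (h : F ∘ Smap = Smap ∘ F) (x : V × V × V) :
    (F (Smap x)).1 = (F x).2.1 :=
  congrArg Prod.fst (congrFun h x)

theorem snd_fst_apply_Smap_of_comp_Smap (h : F ∘ Smap = Smap ∘ F) (x : V × V × V) :
    (F (Smap x)).2.1 = (F x).2.2 :=
  congrArg (fun y => y.2.1) (congrFun h x)

theorem eq_gammaA_of_comp_Smap (h : F ∘ Smap = Smap ∘ F) :
    F = gammaA (fun a b c => (F (a, b, c)).1) := by
  funext ⟨a, b, c⟩
  have h₂ : (F (a, b, c)).2.1 = (F (b, c, c)).1 :=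
    (fst_apply_Smap_of_comp_Smap h (a, b, c)).symm
  have h₃ : (F (a, b, c)).2.2 = (F (c, c, c)).1 := calc
    (F (a, b, c)).2.2 = (F (b, c, c)).2.1 := (snd_fst_apply_Smap_of_comp_Smap h (a, b, c)).symm
    _ = (F (c, c, c)).1 := (fst_apply_Smap_of_comp_Smap h (b, c, c)).symm
  exact Prod.ext rfl (Prod.ext h₂ h₃)

end

theorem networkA_S_equivariance_general {V : Type*} :
    (∀ f : V → V → V → V, (gammaA f) ∘ Smap = Smap ∘ (gammaA f)) ∧
    (∀ F : V × V × V → V × V × V, F ∘ Smap = Smap ∘ F →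
      F = gammaA (fun a b c => (F (a, b, c)).1)) :=
  ⟨gammaA_comp_Smap, fun _ => eq_gammaA_of_comp_Smap⟩

/-- `γ_f^A` commutes with `S : (x₁,x₂,x₃) ↦ (x₂,x₃,x₃)`, and
conversely every `F : V³ → V³` with `F ∘ S = S ∘ F` equals `γ_f^A` for
`f := F₁`. -/
theorem networkA_S_equivariance {V : Type*} [AddCommGroup V] [Module ℝ V] :
    (∀ f : V → V → V → V, (gammaA f) ∘ Smap = Smap ∘ (gammaA f)) ∧
    (∀ F : V × V × V → V × V × V, F ∘ Smap = Smap ∘ F →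
      F = gammaA (fun a b c => (F (a, b, c)).1)) :=
  networkA_S_equivariance_general
end

section
/- Under the identification X_1 = x_1, X_2 = X_3 = x_2, X_4 = x_3, the subspace {X_2 = X_3} ⊂ ℝ^4 is invariant under the fundamental network vector field Γ_f^{B̃} of network B̃, and the restriction of Γ_f^{B̃} to this subspace equals the admissible vector field γ_f^B of network B; i.e., the embedding ι(x_1,x_2,x_3) := (x_1,x_2,x_2,x_3) satisfies ι ∘ γ_f^B = Γ_f^{B̃} ∘ ι for every f : ℝ^4 → ℝ. -/
/-- The fundamental network vector field of network B̃ on `ℝ⁴`. -/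
def GammaB (f : ℝ → ℝ → ℝ → ℝ → ℝ) : ℝ × ℝ × ℝ × ℝ → ℝ × ℝ × ℝ × ℝ :=
  fun X => (f X.1 X.2.1 X.2.2.1 X.2.2.2,
            f X.2.1 X.2.2.2 X.2.2.1 X.2.2.2,
            f X.2.2.1 X.2.2.2 X.2.2.1 X.2.2.2,
            f X.2.2.2 X.2.2.2 X.2.2.1 X.2.2.2)

/-- The admissible vector field of network B on `ℝ³`. -/
def gammaB (f : ℝ → ℝ → ℝ → ℝ → ℝ) : ℝ × ℝ × ℝ → ℝ × ℝ × ℝ :=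
  fun x => (f x.1 x.2.1 x.2.1 x.2.2,
            f x.2.1 x.2.2 x.2.1 x.2.2,
            f x.2.2 x.2.2 x.2.1 x.2.2)

/-- The embedding `ι(x₁,x₂,x₃) = (x₁,x₂,x₂,x₃)` realizing network B as the
synchrony space `{X₂ = X₃}` of its fundamental network B̃. -/
def iotaB : ℝ × ℝ × ℝ → ℝ × ℝ × ℝ × ℝ :=
  fun x => (x.1, x.2.1, x.2.1, x.2.2)

/-- the subspace `{X₂ = X₃} ⊂ ℝ⁴` is invariant under the
fundamental network vector field `Γ_f^{B̃}`, and the restriction of `Γ_f^{B̃}`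
to it is the admissible vector field `γ_f^B` of network B:
`ι ∘ γ_f^B = Γ_f^{B̃} ∘ ι` for every `f`. -/
theorem networkB_quotient (f : ℝ → ℝ → ℝ → ℝ → ℝ) :
    (∀ X : ℝ × ℝ × ℝ × ℝ, X.2.1 = X.2.2.1 →
      (GammaB f X).2.1 = (GammaB f X).2.2.1) ∧
    (iotaB ∘ gammaB f = GammaB f ∘ iotaB) :=
  ⟨fun X h => congrArg (fun t => f t X.2.2.2 X.2.2.1 X.2.2.2) h, rfl⟩
end

section
/- The fundamental network vector field of network B̃ commutes with the two noninvertible linear maps T_1 : (X_1,X_2,X_3,X_4) ↦ (X_2,X_4,X_3,X_4) and T_2 : (X_1,X_2,X_3,X_4) ↦ (X_3,X_4,X_3,X_4); conversely, every F : ℝ^4 → ℝ^4 commuting with both T_1 and T_2 equals Γ_f^{B̃} for f = F_1. -/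
/-- The noninvertible linear map `T₁(X₁,X₂,X₃,X₄) = (X₂,X₄,X₃,X₄)`. -/
def T1 : ℝ × ℝ × ℝ × ℝ → ℝ × ℝ × ℝ × ℝ :=
  fun X => (X.2.1, X.2.2.2, X.2.2.1, X.2.2.2)

/-- The noninvertible linear map `T₂(X₁,X₂,X₃,X₄) = (X₃,X₄,X₃,X₄)`. -/
def T2 : ℝ × ℝ × ℝ × ℝ → ℝ × ℝ × ℝ × ℝ :=
  fun X => (X.2.2.1, X.2.2.2, X.2.2.1, X.2.2.2)

/-!
Both commutation identities hold by unfolding. Conversely, evaluating `F ∘ T = T ∘ F` and reading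
off coordinates expresses every component of `F` through the first one:
`F₂ = F₁ ∘ T₁`, `F₃ = F₁ ∘ T₂` and `F₄ = F₂ ∘ T₂ = F₁ ∘ T₁ ∘ T₂`, which is exactly `Γ_{F₁}`.
-/

theorem GammaB_comp_T1 (f : ℝ → ℝ → ℝ → ℝ → ℝ) : GammaB f ∘ T1 = T1 ∘ GammaB f := rfl

theorem GammaB_comp_T2 (f : ℝ → ℝ → ℝ → ℝ → ℝ) : GammaB f ∘ T2 = T2 ∘ GammaB f := rfl

section Converse

variable {F : ℝ × ℝ × ℝ × ℝ → ℝ × ℝ × ℝ × ℝ}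

theorem fst_apply_T1_of_comp_T1 (h1 : F ∘ T1 = T1 ∘ F) (X : ℝ × ℝ × ℝ × ℝ) :
    (F (T1 X)).1 = (F X).2.1 :=
  congrArg Prod.fst (congrFun h1 X)

theorem fst_apply_T2_of_comp_T2 (h2 : F ∘ T2 = T2 ∘ F) (X : ℝ × ℝ × ℝ × ℝ) :
    (F (T2 X)).1 = (F X).2.2.1 :=
  congrArg Prod.fst (congrFun h2 X)

theorem fst_apply_T1_T2_of_comp (h1 : F ∘ T1 = T1 ∘ F) (h2 : F ∘ T2 = T2 ∘ F)
    (X : ℝ × ℝ × ℝ × ℝ) : (F (T1 (T2 X))).1 = (F X).2.2.2 :=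
  (fst_apply_T1_of_comp_T1 h1 (T2 X)).trans (congrArg (fun Y => Y.2.1) (congrFun h2 X))

theorem eq_GammaB_of_comp_T1_of_comp_T2 (h1 : F ∘ T1 = T1 ∘ F) (h2 : F ∘ T2 = T2 ∘ F) :
    F = GammaB (fun a b c d => (F (a, b, c, d)).1) := by
  funext X
  exact Prod.ext rfl <| Prod.ext (fst_apply_T1_of_comp_T1 h1 X).symm <|
    Prod.ext (fst_apply_T2_of_comp_T2 h2 X).symm (fst_apply_T1_T2_of_comp h1 h2 X).symm

end Converse

/-- `Γ_f^{B̃}` commutes with `T₁` and `T₂`; conversely every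
`F : ℝ⁴ → ℝ⁴` commuting with both `T₁` and `T₂` equals `Γ_f^{B̃}` for
`f = F₁`. -/
theorem networkBtilde_equivariance :
    (∀ f : ℝ → ℝ → ℝ → ℝ → ℝ,
      (GammaB f) ∘ T1 = T1 ∘ (GammaB f) ∧ (GammaB f) ∘ T2 = T2 ∘ (GammaB f)) ∧
    (∀ F : ℝ × ℝ × ℝ × ℝ → ℝ × ℝ × ℝ × ℝ,
      F ∘ T1 = T1 ∘ F → F ∘ T2 = T2 ∘ F →
      F = GammaB (fun a b c d => (F (a, b, c, d)).1)) :=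
  ⟨fun f => ⟨GammaB_comp_T1 f, GammaB_comp_T2 f⟩,
    fun _ h1 h2 => eq_GammaB_of_comp_T1_of_comp_T2 h1 h2⟩
end
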